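/- arXiv:0901.3170 — 9 statements merged into one kernel-verified Lean document; each statement's English description precedes it below -/
import Mathlib

section
/- Knuth's set {x_1, ..., x_n}, where x_i consists of i ones followed by n-i zeros, is a balancing set: for every y in F_2^n there exists i such that the Hamming weight of y + x_i equals n/2. -/
/-!
Flipping the `i+1`-st coordinate changes the weight of `y + x_i` by at most one, and the weights
of `y + x_0 = y` and of `y + x_n = y + 1` add up to `n`. So `n / 2` lies between the two end values
and a discrete intermediate value argument finds it; when it is attained already at `i = 0`, it is
attained at `i = n` as well.
-/

theorem hammingDist_le_one {ι : Type*} [Fintype ι] {β : ι → Type*} [∀ i, DecidableEq (β i)]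
    {x y : ∀ i, β i} (h : ∀ i j, x i ≠ y i → x j ≠ y j → i = j) : hammingDist x y ≤ 1 :=
  Finset.card_le_one.2 fun i hi j hj => h i j (Finset.mem_filter.1 hi).2 (Finset.mem_filter.1 hj).2

theorem hammingDist_add_left {ι : Type*} [Fintype ι] {β : ι → Type*} [∀ i, DecidableEq (β i)]
    [∀ i, Add (β i)] [∀ i, IsLeftCancelAdd (β i)] (y x x' : ∀ i, β i) :
    hammingDist (y + x) (y + x') = hammingDist x x' := by
  simp only [hammingDist, Pi.add_apply, ne_eq, add_right_inj]

theorem abs_hammingNorm_add_sub_hammingNorm_add_le {ι : Type*} [Fintype ι] {β : ι → Type*}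
    [∀ i, DecidableEq (β i)] [∀ i, AddGroup (β i)] (y x x' : ∀ i, β i) :
    |(hammingNorm (y + x) : ℤ) - hammingNorm (y + x')| ≤ hammingDist x x' := by
  have h₁ := hammingDist_triangle (y + x) (y + x') 0
  have h₂ := hammingDist_triangle (y + x') (y + x) 0
  rw [hammingDist_add_left] at h₁ h₂
  rw [hammingDist_comm x'] at h₂
  simp only [hammingDist_zero_right] at h₁ h₂
  rw [abs_le]
  omega

theorem ZMod.hammingNorm_add_hammingNorm_add_one {ι : Type*} [Fintype ι] (y : ι → ZMod 2) :
    hammingNorm y + hammingNorm (y + 1) = Fintype.card ι := by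
  have h : ∀ a : ZMod 2, a + 1 ≠ 0 ↔ ¬a ≠ 0 := by decide
  simp only [hammingNorm, Pi.add_apply, Pi.one_apply, h]
  exact Finset.card_filter_add_card_filter_not _

theorem Int.exists_pos_eq_of_succ_le {g : ℕ → ℤ} {m : ℤ} {n : ℕ}
    (hg : ∀ i < n, g (i + 1) ≤ g i + 1) (h0 : g 0 < m) (hn : m ≤ g n) :
    ∃ i, 0 < i ∧ i ≤ n ∧ g i = m := by
  induction n with
  | zero => omega
  | succ n ih =>
    by_cases hc : m ≤ g n
    · obtain ⟨i, hi0, hin, hgi⟩ := ih (fun i hi => hg i (by omega)) hc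
      exact ⟨i, hi0, by omega, hgi⟩
    · have := hg n n.lt_succ_self
      exact ⟨n + 1, n.succ_pos, le_rfl, by omega⟩

theorem Int.exists_pos_eq_of_abs_succ_sub_le_one {g : ℕ → ℤ} {m : ℕ} (hm : 0 < m)
    (hg : ∀ i < 2 * m, |g (i + 1) - g i| ≤ 1) (hsum : g 0 + g (2 * m) = 2 * m) :
    ∃ i, 0 < i ∧ i ≤ 2 * m ∧ g i = m := by
  have hstep : ∀ i < 2 * m, g (i + 1) ≤ g i + 1 ∧ g i ≤ g (i + 1) + 1 := fun i hi => by
    have := abs_le.1 (hg i hi)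
    omega
  rcases lt_trichotomy (g 0) m with h | h | h
  · exact Int.exists_pos_eq_of_succ_le (fun i hi => (hstep i hi).1) h (by omega)
  · exact ⟨2 * m, by omega, le_rfl, by omega⟩
  · obtain ⟨i, hi0, hin, hgi⟩ := Int.exists_pos_eq_of_succ_le (g := fun i => -g i) (m := -m)
      (fun i hi => by have := (hstep i hi).2; omega) (by omega) (by omega)
    exact ⟨i, hi0, hin, by omega⟩

def knuthWord (n i : ℕ) : Fin n → ZMod 2 := fun j => if (j : ℕ) < i then 1 else 0

theorem knuthWord_zero (n : ℕ) : knuthWord n 0 = 0 := by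
  ext j
  simp [knuthWord]

theorem knuthWord_self (n : ℕ) : knuthWord n n = 1 := by
  ext j
  simp [knuthWord, j.isLt]

theorem hammingDist_knuthWord_succ_le_one (n i : ℕ) :
    hammingDist (knuthWord n (i + 1)) (knuthWord n i) ≤ 1 := by
  have hdiff : ∀ j : Fin n, knuthWord n (i + 1) j ≠ knuthWord n i j → (j : ℕ) = i := by
    intro j hj
    by_contra hji
    exact hj (by simp only [knuthWord, show (j : ℕ) < i + 1 ↔ (j : ℕ) < i by omega])
  exact hammingDist_le_one fun j k hj hk => Fin.ext ((hdiff j hj).trans (hdiff k hk).symm)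

theorem stmt1 (n : ℕ) (hn : 0 < n) (he : Even n) (y : Fin n → ZMod 2) :
    ∃ i, 1 ≤ i ∧ i ≤ n ∧
      hammingNorm (y + fun j : Fin n => if (j : ℕ) < i then (1 : ZMod 2) else 0) = n / 2 := by
  obtain ⟨m, rfl⟩ := he.two_dvd
  set g : ℕ → ℤ := fun i => hammingNorm (y + knuthWord (2 * m) i) with hg
  have hstep (i : ℕ) : |g (i + 1) - g i| ≤ 1 :=
    (abs_hammingNorm_add_sub_hammingNorm_add_le y _ _).trans
      (mod_cast hammingDist_knuthWord_succ_le_one (2 * m) i)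
  have hsum : g 0 + g (2 * m) = 2 * m := by
    have := ZMod.hammingNorm_add_hammingNorm_add_one y
    simp only [hg, knuthWord_zero, knuthWord_self, add_zero, Fintype.card_fin] at this ⊢
    exact_mod_cast this
  obtain ⟨i, hi0, hin, hgi⟩ :=
    Int.exists_pos_eq_of_abs_succ_sub_le_one (by omega) (fun i _ => hstep i) hsum
  refine ⟨i, hi0, hin, ?_⟩
  rw [Nat.mul_div_cancel_left m two_pos]
  exact (Nat.cast_inj (R := ℤ)).1 hgi
end

section
/- For every subset C of F_2^n, the average of Q(C + F x) over all x in F_2^n equals Q(C)^2; that is, 2^{-n} * sum_{x in F^n} Q(C ∪ (C+x)) = Q(C)^2. -/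
/-- The set of words at Hamming distance exactly `n/2` from some element of `C`. -/
def ballHalf (n : ℕ) (C : Set (Fin n → ZMod 2)) : Set (Fin n → ZMod 2) :=
  {y | ∃ c ∈ C, hammingDist y c = n / 2}

/-- `Q(C) = 1 - |B(C)|/2^n`, the fraction of words not balanced by `C`. -/
noncomputable def Qfrac (n : ℕ) (C : Set (Fin n → ZMod 2)) : ℝ :=
  1 - (Nat.card (ballHalf n C) : ℝ) / 2 ^ n

/-!
`B` commutes with unions and translations, so with `A` the complement of `B(C)` the complement
of `B(C ∪ (C + x))` is `A ∩ (A + x)`, and `2^n Q(C ∪ (C + x)) = |A ∩ (A + x)|`. Summing over `x`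
counts the pairs `(y, x)` with `y ∈ A` and `y - x ∈ A`, of which there are `|A|²`.
-/

theorem hammingDist_add_right {ι : Type*} [Fintype ι] {β : ι → Type*} [∀ i, AddGroup (β i)]
    [∀ i, DecidableEq (β i)] (x y z : ∀ i, β i) :
    hammingDist (x + z) (y + z) = hammingDist x y :=
  hammingDist_comp (fun i => (· + z i)) fun i => add_left_injective (z i)

theorem Set.sum_ncard_inter_image_add_right {G : Type*} [AddGroup G] [Fintype G] (A : Set G) :
    ∑ x, (A ∩ (· + x) '' A).ncard = A.ncard ^ 2 := by
  classical
  have hcount : ∀ x, (A ∩ (· + x) '' A).ncard = ∑ y ∈ A.toFinset, if y - x ∈ A then 1 else 0 := by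
    intro x
    rw [Set.ncard_eq_toFinset_card', ← Finset.card_filter]
    congr 1
    ext y
    simp [Set.image_add_right, sub_eq_add_neg]
  have hfiber : ∀ y, ∑ x : G, (if y - x ∈ A then 1 else 0) = A.ncard := by
    intro y
    rw [Fintype.sum_equiv (Equiv.subLeft y) (fun x => if y - x ∈ A then 1 else 0)
        (fun z => if z ∈ A then 1 else 0) (fun _ => rfl),
      Finset.sum_boole, Set.ncard_eq_toFinset_card']
    simp
  simp_rw [hcount]
  rw [Finset.sum_comm]
  simp_rw [hfiber]
  rw [Finset.sum_const, smul_eq_mul, ← Set.ncard_eq_toFinset_card', sq]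

theorem ballHalf_union {n : ℕ} (C D : Set (Fin n → ZMod 2)) :
    ballHalf n (C ∪ D) = ballHalf n C ∪ ballHalf n D := by
  ext y
  simp only [ballHalf, Set.mem_union, Set.mem_ofPred_eq, or_and_right, exists_or]

theorem ballHalf_image_add_right {n : ℕ} (C : Set (Fin n → ZMod 2)) (x : Fin n → ZMod 2) :
    ballHalf n ((· + x) '' C) = (· + x) '' ballHalf n C := by
  ext y
  simp only [ballHalf, Set.image_add_right, Set.mem_preimage, Set.mem_ofPred_eq]
  constructor
  · rintro ⟨c, hc, hd⟩
    exact ⟨c + -x, hc, by rwa [hammingDist_add_right]⟩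
  · rintro ⟨c, hc, hd⟩
    refine ⟨c + x, by simpa using hc, ?_⟩
    rwa [← hammingDist_add_right y _ (-x), add_neg_cancel_right]

theorem Qfrac_eq_ncard_compl_div (n : ℕ) (C : Set (Fin n → ZMod 2)) :
    Qfrac n C = ((ballHalf n C)ᶜ.ncard : ℝ) / 2 ^ n := by
  have hsum : ((ballHalf n C).ncard : ℝ) + (ballHalf n C)ᶜ.ncard = 2 ^ n := by
    exact_mod_cast (Set.ncard_add_ncard_compl (ballHalf n C)).trans (by simp)
  rw [Qfrac, Nat.card_coe_set_eq]
  field_simp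
  linarith

theorem stmt3_general (n : ℕ) (C : Set (Fin n → ZMod 2)) :
    (2 : ℝ) ^ (-(n : ℤ)) *
        ∑ x : Fin n → ZMod 2, Qfrac n (C ∪ (fun s => s + x) '' C)
      = (Qfrac n C) ^ 2 := by
  simp_rw [Qfrac_eq_ncard_compl_div, ballHalf_union, ballHalf_image_add_right, Set.compl_union,
    ← Set.image_compl_eq (add_left_injective _ |>.bijective_of_finite), ← Finset.sum_div,
    ← Nat.cast_sum, Set.sum_ncard_inter_image_add_right, zpow_neg, zpow_natCast]
  field_simp
  push_cast
  ring

theorem stmt3 (n : ℕ) (hn : 0 < n) (he : Even n) (C : Set (Fin n → ZMod 2)) :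
    (2 : ℝ) ^ (-(n : ℤ)) *
        ∑ x : Fin n → ZMod 2, Qfrac n (C ∪ (fun s => s + x) '' C)
      = (Qfrac n C) ^ 2 :=
  stmt3_general n C
end

section
/- If Q({0}) <= 1 - 1/sqrt(2n) and l >= (3/2) log_2 n, then (1 - 1/sqrt(2n))^{2^l} < 2^{-n}; consequently, any subset C of F_2^n with Q(C) <= Q({0})^{2^l} satisfies Q(C) = 0, i.e., C is a balancing set. -/
/-! The bound is `(1 - 1/s)^N ≤ exp(-N/s)` with `s = √(2n)` and `N = 2^l ≥ n√n`, so the exponent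
is at least `n / √2 > n log 2` because `√2 · log 2 < 1`. For the second part, `2^n · Q(C)` counts
the points outside the ball, so `Q(C) < 2^{-n}` forces it to vanish. -/

open Real

theorem one_sub_inv_pow_lt_two_zpow_neg {s : ℝ} (hs : 1 ≤ s) {N n : ℕ}
    (h : n * log 2 * s < N) : (1 - 1 / s) ^ N < (2 : ℝ) ^ (-(n : ℤ)) := by
  have hs0 : 0 < s := by linarith
  have hbase : 0 ≤ 1 - 1 / s := by
    rw [sub_nonneg, div_le_one hs0]
    exact hs
  have hexp : n * log 2 < N * (1 / s) := by
    rwa [mul_one_div, lt_div_iff₀ hs0]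
  calc (1 - 1 / s) ^ N ≤ exp (-(1 / s)) ^ N := by
        gcongr
        linarith [add_one_le_exp (-(1 / s))]
    _ = exp (-(N * (1 / s))) := by rw [← exp_nat_mul, mul_neg]
    _ < exp (-(n * log 2)) := exp_lt_exp.mpr (neg_lt_neg hexp)
    _ = (2 : ℝ) ^ (-(n : ℤ)) := by
        rw [exp_neg, mul_comm, exp_mul, exp_log two_pos, rpow_natCast, zpow_neg, zpow_natCast]

theorem log_two_mul_sqrt_two_lt_one : log 2 * √2 < 1 := by
  have hsqrt : √2 < 1.4143 := by
    rw [sqrt_lt' (by norm_num)]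
    norm_num
  nlinarith [log_two_lt_d9, log_pos one_lt_two, sqrt_nonneg 2]

theorem mul_sqrt_le_two_pow_of_three_halves_logb_le {x : ℝ} (hx : 0 < x) {l : ℕ}
    (hl : 3 / 2 * logb 2 x ≤ l) : x * √x ≤ 2 ^ l := by
  have hrpow : (2 : ℝ) ^ (3 / 2 * logb 2 x) = x * √x := by
    rw [mul_comm, rpow_mul zero_le_two, rpow_logb two_pos (by norm_num) hx,
      show (3 / 2 : ℝ) = 1 + 1 / 2 by norm_num, rpow_add hx, rpow_one, sqrt_eq_rpow]
  rw [← hrpow, ← rpow_natCast]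
  exact rpow_le_rpow_of_exponent_le one_le_two hl

theorem mul_log_two_mul_sqrt_two_mul_lt_two_pow {n l : ℕ} (hn : 0 < n)
    (hl : 3 / 2 * logb 2 n ≤ l) : n * log 2 * √(2 * n) < (2 ^ l : ℕ) := by
  have hn' : (0 : ℝ) < n := by exact_mod_cast hn
  calc n * log 2 * √(2 * n) = (log 2 * √2) * (n * √n) := by
        rw [sqrt_mul zero_le_two]
        ring
    _ < n * √n := mul_lt_of_lt_one_left (by positivity) log_two_mul_sqrt_two_lt_one
    _ ≤ (2 ^ l : ℕ) := by
        push_cast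
        exact mul_sqrt_le_two_pow_of_three_halves_logb_le hn' hl

section Qfrac

variable {n : ℕ} {C : Set (Fin n → ZMod 2)}

theorem Qfrac_eq_ncard_compl : Qfrac n C = (ballHalf n C)ᶜ.ncard / 2 ^ n := by
  have hsum := Set.ncard_add_ncard_compl (ballHalf n C)
  rw [Nat.card_eq_fintype_card, Fintype.card_fun, ZMod.card, Fintype.card_fin] at hsum
  rw [Qfrac, Nat.card_coe_set_eq, eq_div_iff (by positivity), sub_mul, one_mul,
    div_mul_cancel₀ _ (by positivity)]
  have : ((ballHalf n C).ncard : ℝ) + (ballHalf n C)ᶜ.ncard = 2 ^ n := by exact_mod_cast hsum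
  linarith

theorem Qfrac_nonneg : 0 ≤ Qfrac n C := by
  rw [Qfrac_eq_ncard_compl]
  positivity

theorem Qfrac_eq_zero_iff : Qfrac n C = 0 ↔ ballHalf n C = Set.univ := by
  rw [Qfrac_eq_ncard_compl, div_eq_zero_iff, Nat.cast_eq_zero, Set.ncard_eq_zero,
    Set.compl_empty_iff]
  simp

theorem Qfrac_eq_zero_of_lt_two_zpow_neg (h : Qfrac n C < (2 : ℝ) ^ (-(n : ℤ))) :
    Qfrac n C = 0 := by
  rw [Qfrac_eq_ncard_compl, zpow_neg, zpow_natCast, ← one_div,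
    div_lt_div_iff_of_pos_right (by positivity), Nat.cast_lt_one] at h
  rw [Qfrac_eq_ncard_compl, h, Nat.cast_zero, zero_div]

end Qfrac

theorem stmt6_general (n : ℕ) (hn : 0 < n) (l : ℕ)
    (hQ0 : Qfrac n {0} ≤ 1 - 1 / Real.sqrt (2 * n))
    (hl : (3 / 2 : ℝ) * Real.logb 2 n ≤ l) :
    (1 - 1 / Real.sqrt (2 * n)) ^ (2 ^ l) < (2 : ℝ) ^ (-(n : ℤ)) ∧
    ∀ C : Set (Fin n → ZMod 2), Qfrac n C ≤ (Qfrac n {0}) ^ (2 ^ l) →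
      Qfrac n C = 0 ∧ ballHalf n C = Set.univ := by
  have hsqrt : 1 ≤ √(2 * n) := by
    rw [one_le_sqrt]
    have : (1 : ℝ) ≤ n := by exact_mod_cast hn
    linarith
  have hbound : (1 - 1 / √(2 * n)) ^ (2 ^ l) < (2 : ℝ) ^ (-(n : ℤ)) :=
    one_sub_inv_pow_lt_two_zpow_neg hsqrt (mul_log_two_mul_sqrt_two_mul_lt_two_pow hn hl)
  refine ⟨hbound, fun C hC => ?_⟩
  have hQ : Qfrac n C = 0 := Qfrac_eq_zero_of_lt_two_zpow_neg <|
    calc Qfrac n C ≤ Qfrac n {0} ^ (2 ^ l) := hC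
      _ ≤ (1 - 1 / √(2 * n)) ^ (2 ^ l) := pow_le_pow_left₀ Qfrac_nonneg hQ0 _
      _ < _ := hbound
  exact ⟨hQ, Qfrac_eq_zero_iff.mp hQ⟩

theorem stmt6 (n : ℕ) (hn : 0 < n) (he : Even n) (l : ℕ)
    (hQ0 : Qfrac n {0} ≤ 1 - 1 / Real.sqrt (2 * n))
    (hl : (3 / 2 : ℝ) * Real.logb 2 n ≤ l) :
    (1 - 1 / Real.sqrt (2 * n)) ^ (2 ^ l) < (2 : ℝ) ^ (-(n : ℤ)) ∧
    ∀ C : Set (Fin n → ZMod 2), Qfrac n C ≤ (Qfrac n {0}) ^ (2 ^ l) →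
      Qfrac n C = 0 ∧ ballHalf n C = Set.univ :=
  stmt6_general n hn l hQ0 hl
end

section
/- Let x, x' in F_2^n with d(x,x') = τn even and (1/2 - δ)n <= τn <= (1/2 + δ)n for some δ in [0, 1/2). Then |B(x) ∩ B(x')| <= 2^{n+2} / (π n sqrt(1 - 4δ^2)). -/
/-!
Over `𝔽₂` a word `y` is determined by the set `S` of coordinates where it differs from `x`, and
it differs from `x'` exactly on `S ∆ D`, where `D` is the set of coordinates where `x` and `x'`
differ. If both sets have `n / 2` elements then `S` meets `D` in `d / 2` points and its
complement in `(n - d) / 2` points, so there are at most `C(d, d/2) * C(n - d, (n - d)/2)` such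
words. Wallis' product gives `C(2m, m) * √(π m) ≤ 4 ^ m`, and `4 d (n - d) ≥ n² (1 - 4 δ²)`
because `d` lies within `δ n` of `n / 2`.
-/

open Real Finset
open scoped Nat symmDiff

lemma Nat.sq_centralBinom_mul_pi_mul_le (m : ℕ) :
    (m.centralBinom : ℝ) ^ 2 * (π * m) ≤ 16 ^ m := by
  have hfact : (2 * m)! = m.centralBinom * m ! ^ 2 := by
    rw [Nat.centralBinom_eq_two_mul_choose, two_mul, ← Nat.add_choose_mul_factorial_mul_factorial]
    ring
  have hc : (0 : ℝ) < m.centralBinom := by exact_mod_cast m.centralBinom_pos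
  have hW : (2 * m + 1) / (2 * m + 2) * (π / 2) ≤
      (16 : ℝ) ^ m / (m.centralBinom ^ 2 * (2 * m + 1)) := by
    convert Real.Wallis.le_W m using 1
    rw [Real.Wallis.W_eq_factorial_ratio, hfact, pow_mul]
    push_cast
    field_simp
    norm_num
  rw [le_div_iff₀ (by positivity), div_mul_eq_mul_div, div_mul_eq_mul_div,
    div_le_iff₀ (by positivity)] at hW
  have hm : (0 : ℝ) ≤ m := m.cast_nonneg
  -- `(2m + 1)² ≥ 4m(m + 1)`
  nlinarith [Real.pi_pos, mul_nonneg (mul_nonneg hc.le Real.pi_pos.le) hm]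

lemma Nat.centralBinom_mul_sqrt_pi_mul_le (m : ℕ) :
    m.centralBinom * √(π * m) ≤ 4 ^ m := by
  calc m.centralBinom * √(π * m) = √((m.centralBinom : ℝ) ^ 2 * (π * m)) := by
        rw [sqrt_mul (sq_nonneg _), sqrt_sq (Nat.cast_nonneg _)]
    _ ≤ √((4 ^ m) ^ 2) := by
        refine Real.sqrt_le_sqrt (m.sq_centralBinom_mul_pi_mul_le.trans_eq ?_)
        rw [← pow_mul, mul_comm, pow_mul]
        norm_num
    _ = 4 ^ m := sqrt_sq (by positivity)

lemma Nat.choose_half_mul_sqrt_le {m : ℕ} (hm : Even m) :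
    (m.choose (m / 2) : ℝ) * (√(π / 2) * √m) ≤ 2 ^ m := by
  obtain ⟨a, rfl⟩ := hm
  rw [← two_mul, Nat.mul_div_cancel_left a two_pos, ← Nat.centralBinom_eq_two_mul_choose,
    ← sqrt_mul (by positivity), pow_mul]
  convert a.centralBinom_mul_sqrt_pi_mul_le using 3
  · push_cast; ring
  · norm_num

lemma mul_sqrt_one_sub_four_mul_sq_le {n d δ : ℝ} (hn : 0 ≤ n) (hd : 0 ≤ d)
    (hlo : (1 / 2 - δ) * n ≤ d) (hhi : d ≤ (1 / 2 + δ) * n) :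
    n * √(1 - 4 * δ ^ 2) ≤ 2 * (√d * √(n - d)) := by
  calc n * √(1 - 4 * δ ^ 2) = √(n ^ 2 * (1 - 4 * δ ^ 2)) := by
        rw [sqrt_mul (sq_nonneg n), sqrt_sq hn]
    _ ≤ √(2 ^ 2 * (d * (n - d))) := by
        refine sqrt_le_sqrt ?_
        linear_combination 4 * mul_nonneg (sub_nonneg.2 hlo) (sub_nonneg.2 hhi)
    _ = 2 * (√d * √(n - d)) := by
        rw [sqrt_mul (sq_nonneg 2), sqrt_sq two_pos.le, sqrt_mul hd]

lemma ZMod.two_ne_iff {a b c : ZMod 2} :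
    a ≠ c ↔ a ≠ b ∧ ¬b ≠ c ∨ b ≠ c ∧ ¬a ≠ b := by
  revert a b c; decide

lemma ZMod.two_eq_of_ne_iff_ne {a b c : ZMod 2} (h : a ≠ c ↔ b ≠ c) : a = b := by
  revert a b c h; decide

lemma Finset.two_mul_card_inter_eq_card_of_card_symmDiff_eq {α : Type*} [DecidableEq α]
    {s t : Finset α} (h : #(s ∆ t) = #s) : 2 * #(s ∩ t) = #t := by
  have hsymm : #(s ∆ t) = #(s \ t) + #(t \ s) := by
    rw [symmDiff_def]
    exact card_union_of_disjoint disjoint_sdiff_sdiff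
  have hs := card_sdiff_add_card_inter s t
  have ht := card_sdiff_add_card_inter t s
  rw [inter_comm] at ht
  omega

lemma injective_filter_ne {ι : Type*} [Fintype ι] (x : ι → ZMod 2) :
    Function.Injective (fun y : ι → ZMod 2 ↦ ({i | y i ≠ x i} : Finset ι)) := by
  intro y y' h
  funext i
  have hi := congrArg (i ∈ ·) h
  simp only [mem_filter, mem_univ, true_and, eq_iff_iff] at hi
  exact ZMod.two_eq_of_ne_iff_ne hi

lemma hammingDist_eq_card_symmDiff {ι : Type*} [Fintype ι] [DecidableEq ι]
    (y x x' : ι → ZMod 2) :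
    hammingDist y x' = #(({i | y i ≠ x i} : Finset ι) ∆ ({i | x i ≠ x' i} : Finset ι)) := by
  unfold hammingDist
  congr 1
  ext i
  simp only [mem_filter, mem_univ, true_and, mem_symmDiff]
  exact ZMod.two_ne_iff

theorem card_sphere_inter_sphere_le {ι : Type*} [Fintype ι] (x x' : ι → ZMod 2) (k : ℕ) :
    Nat.card ({y | hammingDist y x = k} ∩ {y | hammingDist y x' = k} : Set (ι → ZMod 2)) ≤
      (hammingDist x x').choose (hammingDist x x' / 2) *
        (Fintype.card ι - hammingDist x x').choose (k - hammingDist x x' / 2) := by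
  classical
  set d := hammingDist x x'
  set D : Finset ι := {i | x i ≠ x' i}
  have hD : #D = d := rfl
  let split : Finset ι → Finset ι × Finset ι := fun T ↦ (T ∩ D, T \ D)
  have split_injective : Function.Injective split := by
    intro T T' h
    simp only [split, Prod.mk.injEq] at h
    rw [← sdiff_union_inter T D, ← sdiff_union_inter T' D, h.1, h.2]
  rw [Nat.card_eq_card_toFinset]
  calc _ ≤ #(D.powersetCard (d / 2) ×ˢ Dᶜ.powersetCard (k - d / 2)) := by
        refine card_le_card_of_injOn (split ∘ fun y ↦ ({i | y i ≠ x i} : Finset ι)) ?_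
          (split_injective.comp (injective_filter_ne x)).injOn
        intro y hy
        simp only [Set.coe_toFinset, Set.mem_inter_iff, Set.mem_ofPred_eq] at hy
        obtain ⟨hyx, hyx'⟩ := hy
        simp only [Function.comp_apply, split, coe_product, Set.mem_prod, mem_coe,
          mem_powersetCard]
        set S : Finset ι := {i | y i ≠ x i}
        have hS : #S = k := hyx
        have hSD : #(S ∆ D) = k := by rw [← hammingDist_eq_card_symmDiff]; exact hyx'
        have hinter := two_mul_card_inter_eq_card_of_card_symmDiff_eq (hSD.trans hS.symm)
        have hsdiff := card_sdiff_add_card_inter S D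
        refine ⟨⟨inter_subset_right, by omega⟩, ⟨?_, by omega⟩⟩
        exact fun i hi ↦ mem_compl.2 (mem_sdiff.1 hi).2
    _ = _ := by
        rw [card_product, card_powersetCard, card_powersetCard, card_compl, hD]

theorem stmt8_general (n : ℕ) (hn : 0 < n) (he : Even n) (x x' : Fin n → ZMod 2)
    (δ : ℝ) (hδ : δ < 1 / 2)
    (heven : Even (hammingDist x x'))
    (hlo : ((1 : ℝ) / 2 - δ) * n ≤ hammingDist x x')
    (hhi : (hammingDist x x' : ℝ) ≤ ((1 : ℝ) / 2 + δ) * n) :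
    (Nat.card ({y | hammingDist y x = n / 2} ∩ {y | hammingDist y x' = n / 2} :
        Set (Fin n → ZMod 2)) : ℝ)
      ≤ 2 ^ (n + 2) / (Real.pi * n * Real.sqrt (1 - 4 * δ ^ 2)) := by
  set d := hammingDist x x'
  have hdn : d ≤ n := by simpa using hammingDist_le_card_fintype (x := x) (y := x')
  have hcard := card_sphere_inter_sphere_le x x' (n / 2)
  rw [Fintype.card_fin, show n / 2 - d / 2 = (n - d) / 2 by
    obtain ⟨r, hr⟩ := he; obtain ⟨s, hs⟩ := heven; omega] at hcard
  have hchoose₁ := Nat.choose_half_mul_sqrt_le heven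
  have hchoose₂ := Nat.choose_half_mul_sqrt_le (Nat.even_sub hdn |>.2 (iff_of_true he heven))
  rw [Nat.cast_sub hdn] at hchoose₂
  set c₁ := d.choose (d / 2)
  set c₂ := (n - d).choose ((n - d) / 2)
  have hn' : (0 : ℝ) < n := by exact_mod_cast hn
  have hsqrt : 0 < √(1 - 4 * δ ^ 2) := sqrt_pos.2 (by nlinarith)
  have hπ : √(π / 2) * √(π / 2) = π / 2 := mul_self_sqrt (by positivity)
  rw [le_div_iff₀ (by positivity)]
  calc _ ≤ (c₁ * c₂ : ℕ) * (π * n * √(1 - 4 * δ ^ 2)) := by gcongr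
    _ ≤ (c₁ * c₂ : ℕ) * (π * (2 * (√d * √(n - d)))) := by
        rw [mul_assoc π]
        gcongr ?_ * (π * ?_)
        exact mul_sqrt_one_sub_four_mul_sq_le hn'.le d.cast_nonneg hlo hhi
    _ = 4 * ((c₁ * (√(π / 2) * √d)) * (c₂ * (√(π / 2) * √(n - d)))) := by
        push_cast
        linear_combination (-4 * (c₁ * c₂ : ℝ) * √d * √(n - d)) * hπ
    _ ≤ 4 * (2 ^ d * 2 ^ (n - d)) := by gcongr
    _ = 2 ^ (n + 2) := by rw [← pow_add, Nat.add_sub_cancel' hdn, pow_add]; ring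

theorem stmt8 (n : ℕ) (hn : 0 < n) (he : Even n) (x x' : Fin n → ZMod 2)
    (hne : x ≠ x') (δ : ℝ) (hδ0 : 0 ≤ δ) (hδ : δ < 1 / 2)
    (heven : Even (hammingDist x x'))
    (hlo : ((1 : ℝ) / 2 - δ) * n ≤ hammingDist x x')
    (hhi : (hammingDist x x' : ℝ) ≤ ((1 : ℝ) / 2 + δ) * n) :
    (Nat.card ({y | hammingDist y x = n / 2} ∩ {y | hammingDist y x' = n / 2} :
        Set (Fin n → ZMod 2)) : ℝ)
      ≤ 2 ^ (n + 2) / (Real.pi * n * Real.sqrt (1 - 4 * δ ^ 2)) :=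
  stmt8_general n hn he x x' δ hδ heven hlo hhi
end

section
/- Let C_1 be a linear subspace of F_2^n and let C_2 be the random linear subspace spanned by C_1 together with t = ceil(log_2 n) words chosen independently and uniformly from F_2^n. Then Prob{ Q(C_2) > 0 } <= 8 Q(C_1). -/
/-!
Let A be the complement of B(C₁), so |A| = q 2ⁿ. A word y avoids B(C₁ + span u) iff its whole
coset y + span u lies in A, so adding the words u₁, …, u_t one at a time replaces the current set
S of such y by S ∩ (S - v). As ∑_v |S ∩ (S - v)| = |S|², all but 2μ2ⁿ choices of v leave at most
|S|²/(2μ2ⁿ) points: halving μ at each step, the density bound is squared, so after t ≥ log₂ n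
steps nothing survives, except for a set of tuples of probability at most 2μ + 2μ/2 + … ≤ 4μ.
With μ = 2q this gives the bound 8q.
-/

open Finset

section Survivors

variable {G : Type*} [AddCommGroup G] [DecidableEq G]

def survivors : (k : ℕ) → Finset G → (Fin k → G) → Finset G
  | 0, B, _ => B
  | k + 1, B, u => survivors k (B.filter (· + u 0 ∈ B)) (Fin.tail u)

@[simp]
lemma survivors_zero (B : Finset G) (u : Fin 0 → G) : survivors 0 B u = B := rfl

@[simp]
lemma survivors_cons (k : ℕ) (B : Finset G) (v : G) (w : Fin k → G) :
    survivors (k + 1) B (Fin.cons v w) = survivors k (B.filter (· + v ∈ B)) w := by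
  simp [survivors]

@[simp]
lemma survivors_empty (k : ℕ) (u : Fin k → G) : survivors k (∅ : Finset G) u = ∅ := by
  induction k with
  | zero => rfl
  | succ k ih => exact ih _

lemma sum_card_filter_add_mem [Fintype G] (B : Finset G) :
    ∑ v, #(B.filter (· + v ∈ B)) = #B ^ 2 := by
  have hrow : ∀ y : G, #(univ.filter fun v => y + v ∈ B) = #B := fun y =>
    card_bij (fun v _ => y + v) (by simp) (fun _ _ _ _ => add_left_cancel)
      (fun b hb => ⟨b - y, by simpa using hb, by simp⟩)
  simp_rw [card_filter]
  rw [sum_comm]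
  simp_rw [← card_filter, hrow, sum_const, smul_eq_mul, sq]

lemma mem_survivors [Module (ZMod 2) G] (k : ℕ) (B : Finset G) (u : Fin k → G) (y : G) :
    y ∈ survivors k B u ↔ ∀ s ∈ Submodule.span (ZMod 2) (Set.range u), y + s ∈ B := by
  induction k generalizing B y with
  | zero => simp [Set.range_eq_empty]
  | succ k ih =>
    induction u using Fin.consCases with
    | cons v w =>
    simp only [survivors_cons, ih, mem_filter, Fin.range_cons, Submodule.mem_span_insert]
    constructor
    · rintro h _ ⟨a, s, hs, rfl⟩
      obtain rfl | rfl : a = 0 ∨ a = 1 := by revert a; decide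
      · simpa using (h s hs).1
      · simpa [add_comm v, ← add_assoc] using (h s hs).2
    · intro h s hs
      exact ⟨by simpa using h s ⟨0, s, hs, by simp⟩,
        by simpa [add_assoc, add_comm v] using h (v + s) ⟨1, s, hs, by simp⟩⟩

variable [Fintype G]

def survivingTuples (k : ℕ) (B : Finset G) : Finset (Fin k → G) :=
  univ.filter fun u => (survivors k B u).Nonempty

@[simp]
lemma survivingTuples_empty (k : ℕ) : survivingTuples k (∅ : Finset G) = ∅ := by
  simp [survivingTuples]

lemma card_survivingTuples_le_card_pow (k : ℕ) (B : Finset G) :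
    #(survivingTuples k B) ≤ Fintype.card G ^ k :=
  (card_filter_le _ _).trans (by simp)

lemma card_survivingTuples_succ (k : ℕ) (B : Finset G) :
    #(survivingTuples (k + 1) B) = ∑ v, #(survivingTuples k (B.filter (· + v ∈ B))) := by
  simp only [survivingTuples, card_filter]
  rw [← (Fin.consEquiv fun _ => G).sum_comp, Fintype.sum_prod_type]
  simp [Fin.consEquiv]

lemma card_filter_lt_card_filter_add_mem_le {T : ℝ} (hT : 0 < T) (B : Finset G) :
    (#(univ.filter fun v => T < #(B.filter (· + v ∈ B))) : ℝ) ≤ #B ^ 2 / T := by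
  rw [le_div_iff₀ hT, ← nsmul_eq_mul]
  calc _ ≤ ∑ v ∈ univ.filter (fun v => T < #(B.filter (· + v ∈ B))),
          (#(B.filter (· + v ∈ B)) : ℝ) :=
        card_nsmul_le_sum _ _ _ fun v hv => (mem_filter.1 hv).2.le
    _ ≤ ∑ v, (#(B.filter (· + v ∈ B)) : ℝ) :=
        sum_le_sum_of_subset_of_nonneg (filter_subset _ _) fun _ _ _ => by positivity
    _ = #B ^ 2 := by exact_mod_cast sum_card_filter_add_mem B

lemma card_survivingTuples_succ_le (k : ℕ) {B : Finset G} (hBne : B.Nonempty) {μ x : ℝ}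
    (hμ : 0 < μ) (hB : #B ≤ μ * x * Fintype.card G)
    (hstep : ∀ B' : Finset G, #B' ≤ μ / 2 * x ^ 2 * Fintype.card G →
      #(survivingTuples k B') ≤ 2 * μ * Fintype.card G ^ k) :
    #(survivingTuples (k + 1) B) ≤ 4 * μ * Fintype.card G ^ (k + 1) := by
  set N : ℝ := (Fintype.card G : ℝ)
  have hN : 0 < N := by
    obtain ⟨b, -⟩ := hBne
    exact Nat.cast_pos.2 (Fintype.card_pos_iff.2 ⟨b⟩)
  have hBpos : (0 : ℝ) < #B := by exact_mod_cast hBne.card_pos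
  set T : ℝ := #B ^ 2 / (2 * μ * N)
  set S := univ.filter fun v => T < #(B.filter (· + v ∈ B))
  have hS : (#S : ℝ) ≤ 2 * μ * N := by
    have := card_filter_lt_card_filter_add_mem_le (by positivity : 0 < T) B
    rwa [div_div_cancel₀ (by positivity)] at this
  have hT : T ≤ μ / 2 * x ^ 2 * N := by
    rw [div_le_iff₀ (by positivity)]
    nlinarith [mul_le_mul hB hB hBpos.le (hBpos.le.trans hB)]
  have hnotS : ∀ v ∉ S, #(survivingTuples k (B.filter (· + v ∈ B))) ≤ 2 * μ * N ^ k :=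
    fun v hv => hstep _ (le_trans (by simpa [S] using hv) hT)
  have hSc : (#Sᶜ : ℝ) ≤ N := by simp only [N]; exact_mod_cast card_le_univ Sᶜ
  rw [card_survivingTuples_succ, Nat.cast_sum, ← sum_add_sum_compl S]
  calc _ ≤ ∑ _v ∈ S, N ^ k + ∑ _v ∈ Sᶜ, 2 * μ * N ^ k := by
        gcongr with v _ v hv
        · simp only [N]; exact_mod_cast card_survivingTuples_le_card_pow k _
        · exact hnotS v (mem_compl.1 hv)
    _ = #S * N ^ k + #Sᶜ * (2 * μ * N ^ k) := by simp
    _ ≤ 2 * μ * N * N ^ k + N * (2 * μ * N ^ k) := by gcongr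
    _ = 4 * μ * N ^ (k + 1) := by ring

theorem card_survivingTuples_le (k : ℕ) (B : Finset G) {μ x : ℝ} (hμ : 0 ≤ μ) (hx : 0 ≤ x)
    (hB : #B ≤ μ * x * Fintype.card G) (hk : μ * x ^ 2 ^ k * Fintype.card G < 2 ^ k) :
    #(survivingTuples k B) ≤ 4 * μ * Fintype.card G ^ k := by
  induction k generalizing B μ x with
  | zero =>
    have hB1 : (#B : ℝ) < 1 := hB.trans_lt (by simpa using hk)
    simpa [card_eq_zero.1 (Nat.lt_one_iff.1 (by exact_mod_cast hB1))] using hμ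
  | succ k ih =>
    obtain rfl | hBne := B.eq_empty_or_nonempty
    · simp only [survivingTuples_empty, card_empty, Nat.cast_zero]
      positivity
    have hμ : 0 < μ := by
      refine hμ.lt_of_ne fun h => ?_
      have : (1 : ℝ) ≤ #B := by exact_mod_cast hBne.card_pos
      rw [← h] at hB
      linarith
    refine card_survivingTuples_succ_le k hBne hμ hB fun B' hB' => ?_
    have hk' : μ / 2 * (x ^ 2) ^ 2 ^ k * Fintype.card G < 2 ^ k := by
      rw [← pow_mul, ← pow_succ']
      rw [pow_succ (2 : ℝ) k] at hk
      linarith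
    linarith [ih B' (by positivity) (by positivity) hB' hk']

theorem card_survivingTuples_mul_card_le (k : ℕ) (B : Finset G) (hB : 2 * #B < 2 ^ k * 2 ^ 2 ^ k) :
    #(survivingTuples k B) * Fintype.card G ≤ 8 * #B * Fintype.card G ^ k := by
  have hN : (0 : ℝ) < Fintype.card G := by exact_mod_cast Fintype.card_pos
  have hB' : (2 * #B : ℝ) < 2 ^ k * 2 ^ 2 ^ k := by exact_mod_cast hB
  have hcount := card_survivingTuples_le k B (μ := 2 * #B / (Fintype.card G : ℝ)) (x := 1 / 2)
    (by positivity) (by norm_num) (by field_simp; rfl) (calc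
      _ = 2 * #B / (2 : ℝ) ^ 2 ^ k := by rw [one_div, inv_pow]; field_simp
      _ < 2 ^ k := by rwa [div_lt_iff₀ (by positivity)])
  rw [← Nat.cast_le (α := ℝ)]
  push_cast
  calc _ ≤ 4 * (2 * #B / (Fintype.card G : ℝ)) * Fintype.card G ^ k * Fintype.card G := by gcongr
    _ = _ := by field_simp; ring

end Survivors

lemma exists_hammingNorm_eq {ι β : Type*} [Fintype ι] [Zero β] [DecidableEq β] [Nontrivial β]
    {k : ℕ} (hk : k ≤ Fintype.card ι) : ∃ y : ι → β, hammingNorm y = k := by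
  classical
  obtain ⟨s, -, hs⟩ := exists_subset_card_eq (s := (univ : Finset ι)) (by simpa using hk)
  obtain ⟨b, hb⟩ := exists_ne (0 : β)
  exact ⟨fun i => if i ∈ s then b else 0, by simp [hammingNorm, hb, hs]⟩

lemma ballHalf_nonempty (n : ℕ) (C : Submodule (ZMod 2) (Fin n → ZMod 2)) :
    (ballHalf n C).Nonempty := by
  obtain ⟨y, hy⟩ := exists_hammingNorm_eq (ι := Fin n) (β := ZMod 2)
    (by simpa using Nat.div_le_self n 2)
  exact ⟨y, 0, C.zero_mem, by rw [hammingDist_zero_right, hy]⟩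

lemma mem_ballHalf_sup {n : ℕ} (C D : Submodule (ZMod 2) (Fin n → ZMod 2)) (y : Fin n → ZMod 2) :
    y ∈ ballHalf n ↑(C ⊔ D) ↔ ∃ s ∈ D, y + s ∈ ballHalf n C := by
  have hdist : ∀ c d : Fin n → ZMod 2, hammingDist y (c + d) = hammingDist (y - d) c := by
    intro c d
    rw [hammingDist_eq_hammingNorm, hammingDist_eq_hammingNorm]
    congr 1
    abel
  simp only [ballHalf, Set.mem_ofPred_eq, SetLike.mem_coe, Submodule.mem_sup]
  constructor
  · rintro ⟨_, ⟨c, hc, d, hd, rfl⟩, h⟩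
    exact ⟨-d, D.neg_mem hd, c, hc, by rw [← sub_eq_add_neg, ← hdist, h]⟩
  · rintro ⟨s, hs, c, hc, h⟩
    exact ⟨c + -s, ⟨c, hc, -s, D.neg_mem hs, rfl⟩, by rw [hdist, sub_neg_eq_add, h]⟩

lemma Qfrac_eq_card_filter_notMem (n : ℕ) (C : Set (Fin n → ZMod 2))
    [DecidablePred (· ∈ ballHalf n C)] :
    Qfrac n C = #(univ.filter (· ∉ ballHalf n C)) / 2 ^ n := by
  have hsplit := card_filter_add_card_filter_not (s := univ) (· ∈ ballHalf n C)
  rw [card_univ, Fintype.card_fun, ZMod.card, Fintype.card_fin] at hsplit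
  rw [Qfrac, Nat.card_eq_fintype_card, Fintype.card_subtype, eq_div_iff (by positivity)]
  have hsplit' : (#(univ.filter (· ∈ ballHalf n C)) : ℝ) + #(univ.filter (· ∉ ballHalf n C))
      = 2 ^ n := by exact_mod_cast hsplit
  field_simp
  linarith

lemma Qfrac_pos_iff (n : ℕ) (C : Set (Fin n → ZMod 2)) :
    0 < Qfrac n C ↔ ∃ y, y ∉ ballHalf n C := by
  classical
  rw [Qfrac_eq_card_filter_notMem]
  simp [Finset.Nonempty]

lemma mem_survivors_iff_notMem_ballHalf {n k : ℕ} (C : Submodule (ZMod 2) (Fin n → ZMod 2))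
    [DecidablePred (· ∈ ballHalf n C)] (u : Fin k → Fin n → ZMod 2) (y : Fin n → ZMod 2) :
    y ∈ survivors k (univ.filter (· ∉ ballHalf n C)) u ↔
      y ∉ ballHalf n ↑(C ⊔ Submodule.span (ZMod 2) (Set.range u)) := by
  simp [mem_survivors, mem_ballHalf_sup]

lemma card_filter_notMem_ballHalf_lt (n : ℕ) (C : Submodule (ZMod 2) (Fin n → ZMod 2))
    [DecidablePred (· ∈ ballHalf n C)] : #(univ.filter (· ∉ ballHalf n C)) < 2 ^ n := by
  obtain ⟨y, hy⟩ := ballHalf_nonempty n C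
  calc _ < #(univ : Finset (Fin n → ZMod 2)) :=
        card_lt_card ⟨subset_univ _, fun h => by simpa [hy] using h (mem_univ y)⟩
    _ = 2 ^ n := by simp

lemma card_setOf_Qfrac_sup_span_pos (n k : ℕ) (C : Submodule (ZMod 2) (Fin n → ZMod 2))
    [DecidablePred (· ∈ ballHalf n C)] :
    Nat.card {u : Fin k → Fin n → ZMod 2 |
        0 < Qfrac n ↑(C ⊔ Submodule.span (ZMod 2) (Set.range u))} =
      #(survivingTuples k (univ.filter (· ∉ ballHalf n C))) := by
  rw [← Nat.card_eq_finsetCard]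
  refine Nat.card_congr (Equiv.subtypeEquivRight fun u => ?_)
  rw [survivingTuples, mem_filter]
  simp [Qfrac_pos_iff, Finset.Nonempty, mem_survivors_iff_notMem_ballHalf]

lemma add_one_le_ceil_logb_add_two_pow {n : ℕ} (hn : n ≠ 1) :
    n + 1 ≤ ⌈Real.logb 2 n⌉₊ + 2 ^ ⌈Real.logb 2 n⌉₊ := by
  have hclog : ⌈Real.logb 2 n⌉₊ = Nat.clog 2 n := by
    exact_mod_cast Real.natCeil_logb_natCast 2 n
  have hle := Nat.le_pow_clog one_lt_two n
  rw [hclog]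
  rcases Nat.eq_zero_or_pos (Nat.clog 2 n) with h0 | hpos
  · rw [h0] at hle ⊢
    omega
  · omega

theorem stmt10_general (n : ℕ) (he : Even n) (t : ℕ)
    (ht : t = ⌈Real.logb 2 n⌉₊)
    (C₁ : Submodule (ZMod 2) (Fin n → ZMod 2)) :
    (Nat.card {u : Fin t → Fin n → ZMod 2 |
          0 < Qfrac n ↑(C₁ ⊔ Submodule.span (ZMod 2) (Set.range u))} : ℝ) / 2 ^ (n * t)
      ≤ 8 * Qfrac n ↑C₁ := by
  classical
  have hlog : n + 1 ≤ t + 2 ^ t :=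
    ht ▸ add_one_le_ceil_logb_add_two_pow (by rintro rfl; exact Nat.not_even_one he)
  have hA := card_filter_notMem_ballHalf_lt n C₁
  have hcount := card_survivingTuples_mul_card_le t (univ.filter (· ∉ ballHalf n ↑C₁)) <|
    calc _ < 2 ^ (n + 1) := by omega
      _ ≤ 2 ^ (t + 2 ^ t) := Nat.pow_le_pow_right two_pos hlog
      _ = 2 ^ t * 2 ^ 2 ^ t := pow_add _ _ _
  simp only [Fintype.card_fun, ZMod.card, Fintype.card_fin] at hcount
  rw [card_setOf_Qfrac_sup_span_pos, Qfrac_eq_card_filter_notMem, div_le_iff₀ (by positivity),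
    mul_div_assoc', div_mul_eq_mul_div, le_div_iff₀ (by positivity), pow_mul]
  exact_mod_cast hcount

theorem stmt10 (n : ℕ) (hn : 0 < n) (he : Even n) (t : ℕ)
    (ht : t = ⌈Real.logb 2 n⌉₊)
    (C₁ : Submodule (ZMod 2) (Fin n → ZMod 2)) :
    (Nat.card {u : Fin t → Fin n → ZMod 2 |
          0 < Qfrac n ↑(C₁ ⊔ Submodule.span (ZMod 2) (Set.range u))} : ℝ) / 2 ^ (n * t)
      ≤ 8 * Qfrac n ↑C₁ :=
  stmt10_general n he t ht C₁
end

section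
/- With C_0 as the extended simplex code of length M = 2^m, for every y in F_2^M there exists a codeword c in C_0 such that |M/2 - d(y,c)| <= sqrt(M)/2; i.e., C_0 is a floor(sqrt(M)/2)-almost-balancing set. -/
/-! For the codeword `c_v = (u ↦ v ⬝ᵥ u)`, the integer `2 ^ m - 2 d(y, c_v)` is the
Walsh–Hadamard coefficient at `v` of the `±1`-valued function `(-1) ^ y`. By Parseval these
`2 ^ m` coefficients have squares summing to `2 ^ m · 2 ^ m`, so one of them has square at most
`2 ^ m`, which is `|2 ^ m / 2 - d(y, c_v)| ≤ √(2 ^ m) / 2`. -/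

def extSimplexWord (m : ℕ) (v : Fin m → ZMod 2) : (Fin m → ZMod 2) → ZMod 2 :=
  fun u => ∑ i, v i * u i

open Finset Matrix

def signChar : AddChar (ZMod 2) ℤ where
  toFun a := if a = 0 then 1 else -1
  map_zero_eq_one' := rfl
  map_add_eq_mul' := by decide

lemma signChar_sq (a : ZMod 2) : signChar a ^ 2 = 1 := by
  revert a; decide

lemma signChar_ne_one {a : ZMod 2} (ha : a ≠ 0) : signChar a ≠ 1 := by
  revert a; decide

section Walsh

variable {ι : Type*} [Fintype ι] [DecidableEq ι]

def dotProductSignChar (w : ι → ZMod 2) : AddChar (ι → ZMod 2) ℤ where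
  toFun v := signChar (v ⬝ᵥ w)
  map_zero_eq_one' := by simp
  map_add_eq_mul' v v' := by simp [add_dotProduct, AddChar.map_add_eq_mul]

lemma sum_signChar_dotProduct (w : ι → ZMod 2) :
    ∑ v : ι → ZMod 2, signChar (v ⬝ᵥ w) = if w = 0 then 2 ^ Fintype.card ι else 0 := by
  split_ifs with hw
  · simp [hw]
  · obtain ⟨i, hi⟩ := Function.ne_iff.mp hw
    have : dotProductSignChar w ≠ 0 := AddChar.ne_zero_iff.mpr
      ⟨Pi.single i 1, by simpa [dotProductSignChar, single_dotProduct] using signChar_ne_one hi⟩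
    exact AddChar.sum_eq_zero_iff_ne_zero.mpr this

def walshTransform (g : (ι → ZMod 2) → ℤ) (v : ι → ZMod 2) : ℤ :=
  ∑ u, g u * signChar (v ⬝ᵥ u)

theorem sum_walshTransform_sq (g : (ι → ZMod 2) → ℤ) :
    ∑ v, walshTransform g v ^ 2 = 2 ^ Fintype.card ι * ∑ u, g u ^ 2 := by
  have hsign (v u u' : ι → ZMod 2) :
      signChar (v ⬝ᵥ u) * signChar (v ⬝ᵥ u') = signChar (v ⬝ᵥ (u + u')) := by
    rw [dotProduct_add, AddChar.map_add_eq_mul]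
  have hzero (u u' : ι → ZMod 2) : u + u' = 0 ↔ u' = u := by
    rw [add_eq_zero_iff_eq_neg', funext_iff, funext_iff]
    simp [ZMod.neg_eq_self_mod_two]
  calc ∑ v, walshTransform g v ^ 2
      = ∑ u, ∑ u', g u * g u' * ∑ v, signChar (v ⬝ᵥ (u + u')) := by
        simp_rw [walshTransform, sq, sum_mul_sum, mul_sum]
        rw [sum_comm]
        refine sum_congr rfl fun u _ => ?_
        rw [sum_comm]
        refine sum_congr rfl fun u' _ => sum_congr rfl fun v _ => ?_
        rw [← hsign]; ring
    _ = 2 ^ Fintype.card ι * ∑ u, g u ^ 2 := by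
        simp_rw [sum_signChar_dotProduct, hzero, mul_ite, mul_zero, sum_ite_eq', mem_univ,
          if_true, mul_sum, sq]
        exact sum_congr rfl fun u _ => by ring

end Walsh

lemma card_sub_two_mul_hammingDist {α : Type*} [Fintype α] (y c : α → ZMod 2) :
    (Fintype.card α : ℤ) - 2 * hammingDist y c = ∑ u, signChar (y u + c u) := by
  have hpt (a b : ZMod 2) : signChar (a + b) = 1 - 2 * if a = b then 0 else 1 := by
    revert a b; decide
  simp only [hammingDist, card_filter, hpt, sum_sub_distrib, ← mul_sum]
  push_cast
  simp

lemma walshTransform_signChar_comp (m : ℕ) (y : (Fin m → ZMod 2) → ZMod 2)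
    (v : Fin m → ZMod 2) :
    walshTransform (signChar ∘ y) v = 2 ^ m - 2 * hammingDist y (extSimplexWord m v) := by
  have hcard : (2 ^ m : ℤ) = Fintype.card (Fin m → ZMod 2) := by simp
  rw [hcard, card_sub_two_mul_hammingDist]
  simp only [walshTransform, Function.comp_apply, ← AddChar.map_add_eq_mul]
  rfl

lemma exists_walshTransform_signChar_comp_sq_le (m : ℕ) (y : (Fin m → ZMod 2) → ZMod 2) :
    ∃ v, walshTransform (signChar ∘ y) v ^ 2 ≤ 2 ^ m := by
  have hsum :
      ∑ v, walshTransform (signChar ∘ y) v ^ 2 = ∑ _v : Fin m → ZMod 2, (2 ^ m : ℤ) := by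
    simp [sum_walshTransform_sq, signChar_sq]
  obtain ⟨v, -, hv⟩ := exists_le_of_sum_le univ_nonempty hsum.le
  exact ⟨v, hv⟩

theorem stmt16_general (m : ℕ) (y : (Fin m → ZMod 2) → ZMod 2) :
    ∃ v : Fin m → ZMod 2,
      |(2 ^ m : ℝ) / 2 - hammingDist y (extSimplexWord m v)|
        ≤ Real.sqrt (2 ^ m) / 2 := by
  obtain ⟨v, hv⟩ := exists_walshTransform_signChar_comp_sq_le m y
  refine ⟨v, ?_⟩
  have hbal : (2 ^ m : ℝ) / 2 - hammingDist y (extSimplexWord m v)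
      = (walshTransform (signChar ∘ y) v : ℝ) / 2 := by
    rw [walshTransform_signChar_comp]; push_cast; ring
  rw [hbal, abs_div, abs_two]
  gcongr
  exact Real.abs_le_sqrt (by exact_mod_cast hv)

theorem stmt16 (m : ℕ) (hm : 0 < m) (y : (Fin m → ZMod 2) → ZMod 2) :
    ∃ v : Fin m → ZMod 2,
      |(2 ^ m : ℝ) / 2 - hammingDist y (extSimplexWord m v)|
        ≤ Real.sqrt (2 ^ m) / 2 :=
  stmt16_general m y
end

section
/- Let s, m be positive integers, n = s * 2^m, and let C_0^{(s)} be the code of length n whose codewords are the s-fold concatenations (c|c|...|c) of codewords c of the extended simplex code of length M = 2^m. Then for every y in F_2^n there exists x in C_0^{(s)} with |n - 2 d(y,x)| <= sqrt(sn); hence C_0^{(s)} is a λ-almost-balancing set for λ = floor(sqrt(sn)/2), and its dimension is m. -/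
/-!
Write `sgn a = (-1)^a` and `z_j(v) = ∑_u sgn (y_{j,u} + ⟨v,u⟩)`, the correlation of the `j`-th
block of `y` with the simplex codeword of `v`, so that `n - 2 d(y, x_v) = ∑_j z_j(v)`.
Character orthogonality on `𝔽₂^m` gives Parseval's identity `∑_v z_j(v)² = M²` with `M = 2^m`,
hence by Cauchy–Schwarz `∑_v (∑_j z_j(v))² ≤ s ∑_j ∑_v z_j(v)² = s² M²`. Averaging over the
`M` messages, some `v` has `(n - 2 d(y, x_v))² ≤ s² M = s n`.
-/

/-- The `s`-fold concatenation of the extended simplex codeword of message `v`: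
a word of length `n = s * 2^m`, with coordinates indexed by `Fin s × (Fin m → ZMod 2)`,
whose coordinate at `(j, u)` is the inner product `⟨v,u⟩`. -/
def concatSimplexWord (s m : ℕ) (v : Fin m → ZMod 2) :
    (Fin s × (Fin m → ZMod 2)) → ZMod 2 :=
  fun p => ∑ i, v i * p.2 i

open Finset Matrix

noncomputable def sgn (a : ZMod 2) : ℝ := if a = 0 then 1 else -1

lemma ZMod.two_cases (a : ZMod 2) : a = 0 ∨ a = 1 := by
  revert a; decide

lemma sgn_add (a b : ZMod 2) : sgn (a + b) = sgn a * sgn b := by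
  rcases a.two_cases with rfl | rfl <;> rcases b.two_cases with rfl | rfl <;>
    simp [sgn, CharTwo.add_self_eq_zero]

lemma sgn_sq (a : ZMod 2) : sgn a ^ 2 = 1 := by
  unfold sgn; split_ifs <;> norm_num

lemma sgn_sum {ι : Type*} (t : Finset ι) (g : ι → ZMod 2) :
    sgn (∑ i ∈ t, g i) = ∏ i ∈ t, sgn (g i) := by
  induction t using Finset.cons_induction with
  | empty => simp [sgn]
  | cons i t hi ih => rw [sum_cons, prod_cons, sgn_add, ih]

lemma sum_sgn_mul (c : ZMod 2) : ∑ a : ZMod 2, sgn (a * c) = if c = 0 then 2 else 0 := by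
  rw [show ∑ a : ZMod 2, sgn (a * c) = sgn (0 * c) + sgn (1 * c) from Fin.sum_univ_two _]
  rcases c.two_cases with rfl | rfl <;> norm_num [sgn]

lemma sum_sgn_add_eq_card_sub_two_mul_hammingDist {ι : Type*} [Fintype ι] (x y : ι → ZMod 2) :
    ∑ p, sgn (y p + x p) = Fintype.card ι - 2 * hammingDist y x := by
  have hsgn : ∀ p, sgn (y p + x p) = 1 - 2 * if y p ≠ x p then 1 else 0 := by
    intro p
    by_cases h : y p = x p <;> norm_num [sgn, CharTwo.add_eq_zero, h]
  simp_rw [hsgn, sum_sub_distrib, ← mul_sum, sum_boole, hammingDist, sum_const, card_univ]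
  simp

section
variable {ι : Type*} [Fintype ι] [DecidableEq ι]

lemma sum_sgn_dotProduct (w : ι → ZMod 2) :
    ∑ v : ι → ZMod 2, sgn (v ⬝ᵥ w) = if w = 0 then 2 ^ Fintype.card ι else 0 := by
  calc ∑ v : ι → ZMod 2, sgn (v ⬝ᵥ w) = ∑ v : ι → ZMod 2, ∏ i, sgn (v i * w i) :=
        sum_congr rfl fun v _ => sgn_sum _ _
    _ = ∏ i, ∑ a : ZMod 2, sgn (a * w i) := (Fintype.prod_sum fun i a => sgn (a * w i)).symm
    _ = _ := by simp [sum_sgn_mul, prod_ite_zero, funext_iff]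

lemma sum_sq_sum_mul_sgn_dotProduct (f : (ι → ZMod 2) → ℝ) :
    ∑ v : ι → ZMod 2, (∑ u, f u * sgn (v ⬝ᵥ u)) ^ 2 = 2 ^ Fintype.card ι * ∑ u, f u ^ 2 := by
  calc ∑ v : ι → ZMod 2, (∑ u, f u * sgn (v ⬝ᵥ u)) ^ 2
      = ∑ v : ι → ZMod 2, ∑ u, ∑ u', f u * f u' * sgn (v ⬝ᵥ (u + u')) := by
        simp_rw [sq, sum_mul_sum, dotProduct_add, sgn_add]
        exact sum_congr rfl fun _ _ => sum_congr rfl fun _ _ => sum_congr rfl fun _ _ => by ring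
    _ = ∑ u, ∑ u', f u * f u' * ∑ v : ι → ZMod 2, sgn (v ⬝ᵥ (u + u')) := by
        rw [sum_comm]; simp_rw [mul_sum]; exact sum_congr rfl fun _ _ => sum_comm
    _ = _ := by
        simp_rw [sum_sgn_dotProduct, ← ZModModule.sub_eq_add, sub_eq_zero, mul_ite, mul_zero,
          sum_ite_eq, mem_univ, if_true, mul_sum, sq]
        exact sum_congr rfl fun _ _ => by ring

lemma sum_sq_sum_sgn_add_dotProduct (z : (ι → ZMod 2) → ZMod 2) :
    ∑ v : ι → ZMod 2, (∑ u, sgn (z u + v ⬝ᵥ u)) ^ 2 = (2 ^ Fintype.card ι) ^ 2 := by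
  simp_rw [sgn_add, sum_sq_sum_mul_sgn_dotProduct, sgn_sq, sum_const, card_univ,
    Fintype.card_fun, ZMod.card]
  simp [sq]

end

lemma exists_sq_sum_sgn_add_dotProduct_le {κ ι : Type*} [Fintype κ] [Fintype ι] [DecidableEq ι]
    (y : κ × (ι → ZMod 2) → ZMod 2) :
    ∃ v : ι → ZMod 2,
      (∑ p, sgn (y p + v ⬝ᵥ p.2)) ^ 2 ≤ (Fintype.card κ : ℝ) ^ 2 * 2 ^ Fintype.card ι := by
  set z : κ → (ι → ZMod 2) → ℝ := fun j v => ∑ u, sgn (y (j, u) + v ⬝ᵥ u)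
  have hblocks : ∀ v : ι → ZMod 2, ∑ p, sgn (y p + v ⬝ᵥ p.2) = ∑ j, z j v :=
    fun v => Fintype.sum_prod_type _
  have htotal : ∑ v : ι → ZMod 2, (∑ j, z j v) ^ 2
      ≤ ∑ _v : ι → ZMod 2, (Fintype.card κ : ℝ) ^ 2 * 2 ^ Fintype.card ι :=
    calc ∑ v : ι → ZMod 2, (∑ j, z j v) ^ 2
        ≤ ∑ v : ι → ZMod 2, Fintype.card κ * ∑ j, z j v ^ 2 :=
          sum_le_sum fun v _ => sq_sum_le_card_mul_sum_sq
      _ = Fintype.card κ * ∑ j, ∑ v : ι → ZMod 2, z j v ^ 2 := by rw [← mul_sum, sum_comm]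
      _ = _ := by
          simp only [z, sum_sq_sum_sgn_add_dotProduct, sum_const, card_univ, Fintype.card_fun,
            ZMod.card, nsmul_eq_mul]
          push_cast; ring
  obtain ⟨v, -, hv⟩ := exists_le_of_sum_le univ_nonempty htotal
  exact ⟨v, hblocks v ▸ hv⟩

lemma concatSimplexWord_injective {s : ℕ} (hs : 0 < s) (m : ℕ) :
    Function.Injective (concatSimplexWord s m) := by
  intro v w hvw
  funext i
  simpa [concatSimplexWord, Pi.single_apply] using congrFun hvw (⟨0, hs⟩, Pi.single i 1)

lemma finrank_span_range_concatSimplexWord {s : ℕ} (hs : 0 < s) (m : ℕ) :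
    Module.finrank (ZMod 2) (Submodule.span (ZMod 2) (Set.range (concatSimplexWord s m))) = m := by
  let G : Matrix (Fin m) (Fin s × (Fin m → ZMod 2)) (ZMod 2) := Matrix.of fun i p => p.2 i
  have hG : (G.vecMulLinear : _ → _) = concatSimplexWord s m := rfl
  rw [← hG, ← LinearMap.coe_range, Submodule.span_eq,
    LinearMap.finrank_range_of_inj (hG ▸ concatSimplexWord_injective hs m),
    Module.finrank_fin_fun]

theorem stmt17_general (s m : ℕ) (hs : 0 < s) :
    (∀ y : (Fin s × (Fin m → ZMod 2)) → ZMod 2,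
      ∃ v : Fin m → ZMod 2,
        |((s * 2 ^ m : ℕ) : ℝ) - 2 * hammingDist y (concatSimplexWord s m v)|
          ≤ Real.sqrt ((s : ℝ) * (s * 2 ^ m : ℕ))) ∧
    Module.finrank (ZMod 2)
        ↥(Submodule.span (ZMod 2) (Set.range (concatSimplexWord s m))) = m := by
  refine ⟨fun y => ?_, finrank_span_range_concatSimplexWord hs m⟩
  obtain ⟨v, hv⟩ := exists_sq_sum_sgn_add_dotProduct_le y
  have hcorr : ∑ p, sgn (y p + concatSimplexWord s m v p)
      = ((s * 2 ^ m : ℕ) : ℝ) - 2 * hammingDist y (concatSimplexWord s m v) := by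
    rw [sum_sgn_add_eq_card_sub_two_mul_hammingDist]; simp
  refine ⟨v, Real.abs_le_sqrt ?_⟩
  rw [← hcorr]
  refine hv.trans_eq ?_
  push_cast; simp only [Fintype.card_fin]; ring

theorem stmt17 (s m : ℕ) (hs : 0 < s) (hm : 0 < m) :
    (∀ y : (Fin s × (Fin m → ZMod 2)) → ZMod 2,
      ∃ v : Fin m → ZMod 2,
        |((s * 2 ^ m : ℕ) : ℝ) - 2 * hammingDist y (concatSimplexWord s m v)|
          ≤ Real.sqrt ((s : ℝ) * (s * 2 ^ m : ℕ))) ∧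
    Module.finrank (ZMod 2)
        ↥(Submodule.span (ZMod 2) (Set.range (concatSimplexWord s m))) = m :=
  stmt17_general s m hs
end

section
/- Let C' be a linear [n, k', d'] code over F_2 with 2^{k'} * V(n, d'-1) <= 2^n, where V(n,t) = sum_{i=0}^{t} C(n,i). Let C'' be a random linear code spanned by k'' words chosen independently and uniformly from F_2^n, and let C = C' ⊕ C''. Then for every d <= d', Prob{ minimum distance of C < d } < 2^{k''} * V(n, d-1) / V(n, d'-1). -/
/-! A nonzero word of `C' ⊕ C''` of weight `< d` has the form `c + ∑ aᵢ tᵢ` with `c ∈ C'`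
and `a ≠ 0`, since the nonzero words of `C'` have weight `≥ d' ≥ d`. For fixed `(c, a)` with
`a ≠ 0`, `t ↦ c + ∑ aᵢ tᵢ` is a translate of a surjective homomorphism, hence uniformly
distributed, so it lands in the Hamming ball of radius `d - 1` with probability at most
`V(n, d - 1) / 2ⁿ`. A union bound over the `2^k' (2^k'' - 1)` pairs and `2^k' V(n, d' - 1) ≤ 2ⁿ`
give the bound. -/

/-- `V n t = ∑_{i=0}^{t} C(n,i)`, the volume of the Hamming ball of radius `t`. -/
def hammingVol (n t : ℕ) : ℕ := ∑ i ∈ Finset.range (t + 1), Nat.choose n i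

open Finset Submodule

theorem AddMonoidHom.card_add_mem_mul_card {G M : Type*} [AddGroup G] [Fintype G] [AddGroup M]
    [Fintype M] [DecidableEq M] {f : G →+ M} (hf : Function.Surjective f) (c : M) (A : Finset M) :
    #{g | c + f g ∈ A} * Fintype.card M = #A * Fintype.card G := by
  have hfiber (y : M) : #{g | f g = y} = #{g | f g = 0} :=
    AddMonoidHom.card_fiber_eq_of_mem_range f (hf y) (hf 0)
  have hpre : #{g | c + f g ∈ A} = #A * #{g | f g = 0} := by
    rw [card_eq_sum_card_fiberwise (s := {g | c + f g ∈ A}) (t := A)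
      fun g hg => (mem_filter.1 hg).2, ← smul_eq_mul, ← sum_const]
    refine sum_congr rfl fun y hy => ?_
    rw [← hfiber (-c + y)]
    congr 1
    ext g
    simp only [mem_filter, mem_univ, true_and, eq_neg_add_iff_add_eq]
    exact ⟨And.right, fun h => ⟨h ▸ hy, h⟩⟩
  have huniv : Fintype.card G = Fintype.card M * #{g | f g = 0} := by
    rw [← card_univ, card_eq_sum_card_fiberwise (f := f) (t := univ) fun _ _ => mem_univ _,
      ← smul_eq_mul, ← card_univ, ← sum_const]
    exact sum_congr rfl fun y _ => by simpa using hfiber y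
  rw [hpre, huniv]
  ring

section SumSMul

variable {K M ι : Type*} [DivisionRing K] [AddCommGroup M] [Module K M] [Fintype ι]

theorem surjective_sum_smul {a : ι → K} (ha : a ≠ 0) :
    Function.Surjective fun t : ι → M => ∑ i, a i • t i := by
  classical
  obtain ⟨j, hj⟩ := Function.ne_iff.1 ha
  intro m
  refine ⟨Pi.single j ((a j)⁻¹ • m), ?_⟩
  simp [Pi.single_apply, smul_smul, mul_inv_cancel₀ hj]

theorem card_add_sum_smul_mem_mul_card [Fintype M] [DecidableEq M] [DecidableEq ι] {a : ι → K}
    (ha : a ≠ 0) (c : M) (A : Finset M) :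
    #{t : ι → M | c + ∑ i, a i • t i ∈ A} * Fintype.card M
      = #A * Fintype.card M ^ Fintype.card ι := by
  let f : (ι → M) →+ M := AddMonoidHom.mk' (fun t => ∑ i, a i • t i) fun s t => by
    simp only [Pi.add_apply, smul_add, sum_add_distrib]
  rw [← Fintype.card_fun]
  exact f.card_add_mem_mul_card (surjective_sum_smul ha) c A

theorem card_exists_mem_sup_span_mul_card_le [Fintype K] [Fintype M]
    (C : Submodule K M) (A : Finset M) (hA : ∀ y ∈ C, y ≠ 0 → y ∉ A) :
    Nat.card {t : ι → M | ∃ c ∈ C ⊔ span K (Set.range t), c ≠ 0 ∧ c ∈ A} * Fintype.card M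
      ≤ Nat.card C * (Fintype.card K ^ Fintype.card ι - 1) * #A
        * Fintype.card M ^ Fintype.card ι := by
  classical
  let P : Finset (M × (ι → K)) := (C : Set M).toFinset ×ˢ univ.erase 0
  have hcover : {t : ι → M | ∃ c ∈ C ⊔ span K (Set.range t), c ≠ 0 ∧ c ∈ A}.toFinset
      ⊆ P.biUnion fun p => {t | p.1 + ∑ i, p.2 i • t i ∈ A} := by
    intro t ht
    obtain ⟨c, hc, hc0, hcA⟩ := Set.mem_toFinset.1 ht
    obtain ⟨y, hy, z, hz, rfl⟩ := mem_sup.1 hc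
    obtain ⟨a, rfl⟩ := (mem_span_range_iff_exists_fun K).1 hz
    have ha : a ≠ 0 := by
      rintro rfl
      simp only [Pi.zero_apply, zero_smul, sum_const_zero, add_zero] at hc0 hcA
      exact hA y hy hc0 hcA
    refine mem_biUnion.2 ⟨(y, a), ?_, mem_filter.2 ⟨mem_univ _, hcA⟩⟩
    exact mem_product.2 ⟨Set.mem_toFinset.2 hy, mem_erase.2 ⟨ha, mem_univ _⟩⟩
  have hP : #P = Nat.card C * (Fintype.card K ^ Fintype.card ι - 1) := by
    simp [P, card_product, Set.toFinset_card, Nat.card_eq_fintype_card, card_erase_of_mem]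
  rw [Nat.card_eq_card_toFinset]
  calc _ ≤ (∑ p ∈ P, #{t : ι → M | p.1 + ∑ i, p.2 i • t i ∈ A}) * Fintype.card M :=
        Nat.mul_le_mul_right _ ((card_le_card hcover).trans card_biUnion_le)
    _ = ∑ p ∈ P, #A * Fintype.card M ^ Fintype.card ι := by
        rw [sum_mul]
        exact sum_congr rfl fun p hp =>
          card_add_sum_smul_mem_mul_card (mem_erase.1 (mem_product.1 hp).2).1 p.1 A
    _ = _ := by rw [sum_const, hP, smul_eq_mul]; ring

end SumSMul

theorem card_hammingNorm_lt_le_hammingVol (ι : Type*) [Fintype ι] [DecidableEq ι] (d : ℕ) :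
    #{v : ι → ZMod 2 | hammingNorm v < d} ≤ hammingVol (Fintype.card ι) (d - 1) := by
  have hsupport : Set.InjOn (fun v : ι → ZMod 2 => ({i | v i ≠ 0} : Finset ι))
      ↑({v | hammingNorm v < d} : Finset (ι → ZMod 2)) := by
    intro v _ w _ h
    funext i
    have hi := Finset.ext_iff.1 h i
    simp only [mem_filter, mem_univ, true_and] at hi
    exact (by decide : ∀ x y : ZMod 2, (x ≠ 0 ↔ y ≠ 0) → x = y) _ _ hi
  calc _ ≤ #((range d).biUnion fun i => powersetCard i (univ : Finset ι)) := by
        refine card_le_card_of_injOn _ (fun v hv => ?_) hsupport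
        simp only [coe_filter, mem_univ, true_and, Set.mem_ofPred_eq] at hv
        simpa [hammingNorm] using hv
    _ ≤ ∑ i ∈ range d, (Fintype.card ι).choose i := card_biUnion_le.trans_eq (by simp)
    _ ≤ _ := sum_le_sum_of_subset (range_subset_range.2 (by omega))

theorem hammingVol_pos (n t : ℕ) : 0 < hammingVol n t := by
  rw [hammingVol, sum_range_succ']
  simp

theorem stmt18_general (n k' d' d k'' : ℕ) (hdd' : d ≤ d')
    (C' : Submodule (ZMod 2) (Fin n → ZMod 2))
    (hk' : Module.finrank (ZMod 2) C' = k')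
    (hmin : ∀ c ∈ C', c ≠ 0 → d' ≤ hammingNorm c)
    (hgv : 2 ^ k' * hammingVol n (d' - 1) ≤ 2 ^ n) :
    (Nat.card {t : Fin k'' → Fin n → ZMod 2 |
          ∃ c ∈ C' ⊔ Submodule.span (ZMod 2) (Set.range t),
            c ≠ 0 ∧ hammingNorm c < d} : ℝ) / 2 ^ (n * k'')
      < 2 ^ k'' * (hammingVol n (d - 1) : ℝ) / hammingVol n (d' - 1) := by
  classical
  set A : Finset (Fin n → ZMod 2) := {v | hammingNorm v < d}
  have hmemA (v : Fin n → ZMod 2) : v ∈ A ↔ hammingNorm v < d := by simp [A]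
  have hbad := card_exists_mem_sup_span_mul_card_le (ι := Fin k'') C' A
    fun y hy hy0 hyA => by have := hmin y hy hy0; rw [hmemA] at hyA; omega
  have hC : Nat.card C' = 2 ^ k' := by
    rw [Nat.card_eq_fintype_card, Module.card_eq_pow_finrank (K := ZMod 2), ZMod.card, hk']
  simp only [hmemA, hC, ZMod.card, Fintype.card_fin, Fintype.card_fun, ← pow_mul] at hbad
  have hA : #A ≤ hammingVol n (d - 1) := by
    simpa using card_hammingNorm_lt_le_hammingVol (Fin n) d
  have hK : (1 : ℝ) ≤ 2 ^ k'' := one_le_pow₀ one_le_two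
  have hV' : (0 : ℝ) < hammingVol n (d' - 1) := mod_cast hammingVol_pos n (d' - 1)
  calc _ ≤ 2 ^ k' * (2 ^ k'' - 1) * (#A : ℝ) / 2 ^ n := by
        rw [div_le_div_iff₀ (by positivity) (by positivity)]
        have hbadℝ := (Nat.cast_le (α := ℝ)).2 hbad
        push_cast [Nat.one_le_two_pow] at hbadℝ
        exact hbadℝ
    _ ≤ (2 ^ k'' - 1) * hammingVol n (d - 1) / hammingVol n (d' - 1) := by
        rw [div_le_div_iff₀ (by positivity) hV']
        calc _ = (2 ^ k'' - 1) * (#A : ℝ) * (2 ^ k' * hammingVol n (d' - 1)) := by ring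
          _ ≤ (2 ^ k'' - 1) * hammingVol n (d - 1) * 2 ^ n := by
            gcongr
            exact_mod_cast hgv
    _ < _ := by
        have := hammingVol_pos n (d - 1)
        gcongr
        linarith

theorem stmt18 (n k' d' d k'' : ℕ) (hn : 0 < n) (hd : 0 < d) (hdd' : d ≤ d')
    (C' : Submodule (ZMod 2) (Fin n → ZMod 2))
    (hk' : Module.finrank (ZMod 2) C' = k')
    (hmin : ∀ c ∈ C', c ≠ 0 → d' ≤ hammingNorm c)
    (hgv : 2 ^ k' * hammingVol n (d' - 1) ≤ 2 ^ n) :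
    (Nat.card {t : Fin k'' → Fin n → ZMod 2 |
          ∃ c ∈ C' ⊔ Submodule.span (ZMod 2) (Set.range t),
            c ≠ 0 ∧ hammingNorm c < d} : ℝ) / 2 ^ (n * k'')
      < 2 ^ k'' * (hammingVol n (d - 1) : ℝ) / hammingVol n (d' - 1) :=
  stmt18_general n k' d' d k'' hdd' C' hk' hmin hgv
end

section
/- For every code C ⊆ F_2^n there exists a word x in F_2^n such that the shifted set C + x contains at least C(n, n/2) * |C| / 2^n >= |C| / sqrt(2n) balanced words (words of Hamming weight n/2). -/
/-!
Each word `y` lies in `C + x` for exactly `|C|` shifts `x`, so summing over all `2^n` shifts counts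
every balanced word `|C|` times; some shift therefore contains at least the average
`C(n, n/2) |C| / 2^n` balanced words. The bound `C(2m, m) ≥ 4^m / (2 √m)` follows by induction from
`(m + 1) C(2m + 2, m + 1) = 2 (2m + 1) C(2m, m)`.
-/

open Finset

theorem card_filter_hammingNorm_eq (ι : Type*) [Fintype ι] [DecidableEq ι] (k : ℕ) :
    #{y : ι → ZMod 2 | hammingNorm y = k} = (Fintype.card ι).choose k := by
  rw [← card_univ, ← card_powersetCard]
  refine card_nbij' (fun y => ({i | y i ≠ 0} : Finset ι)) (fun s i => if i ∈ s then 1 else 0)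
    ?_ ?_ ?_ ?_
  · intro y hy
    simpa [hammingNorm] using hy
  · intro s hs
    simp_all [hammingNorm]
  · intro y _
    funext i
    have hbit : ∀ a : ZMod 2, (if a ≠ 0 then 1 else 0) = a := by decide
    simpa using hbit (y i)
  · intro s _
    ext i
    by_cases h : i ∈ s <;> simp [h]

section Averaging

variable {G : Type*} [AddGroup G] [Fintype G] [DecidableEq G]

theorem Finset.sum_card_filter_sub_mem (A B : Finset G) :
    ∑ x, #{y ∈ B | y - x ∈ A} = #A * #B := by
  have hfiber (y : G) : ∑ x, (if y - x ∈ A then 1 else 0) = #A :=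
    calc _ = ∑ z, if z ∈ A then 1 else 0 := (Equiv.subLeft y).sum_comp _
      _ = #A := by simp
  simp_rw [card_filter]
  rw [sum_comm, sum_congr rfl fun y _ => hfiber y, sum_const, smul_eq_mul, mul_comm]

theorem Finset.exists_card_mul_le_card_mul_card_filter_sub_mem (A B : Finset G) :
    ∃ x, #A * #B ≤ Fintype.card G * #{y ∈ B | y - x ∈ A} := by
  obtain ⟨x, -, hx⟩ := exists_le_of_sum_le univ_nonempty (s := univ)
    (f := fun _ => #A * #B) (g := fun x => Fintype.card G * #{y ∈ B | y - x ∈ A}) <| by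
      rw [sum_const, ← mul_sum, sum_card_filter_sub_mem, card_univ, smul_eq_mul]
  exact ⟨x, hx⟩

end Averaging

theorem Nat.four_pow_sq_le_four_mul_mul_centralBinom_sq {m : ℕ} (hm : 0 < m) :
    (4 ^ m) ^ 2 ≤ 4 * m * m.centralBinom ^ 2 := by
  induction m, hm using Nat.le_induction with
  | base => decide
  | succ m hm ih =>
    have hstep := Nat.succ_mul_centralBinom_succ m
    refine Nat.le_of_mul_le_mul_left ?_ m.succ_pos
    calc (m + 1) * (4 ^ (m + 1)) ^ 2 = 16 * (m + 1) * (4 ^ m) ^ 2 := by ring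
      _ ≤ 16 * (m + 1) * (4 * m * m.centralBinom ^ 2) := by gcongr
      _ ≤ 4 * (2 * (2 * m + 1) * m.centralBinom) ^ 2 := by nlinarith
      _ = (m + 1) * (4 * (m + 1) * (m + 1).centralBinom ^ 2) := by rw [← hstep]; ring

theorem Nat.two_pow_le_choose_half_mul_sqrt {n : ℕ} (hn : 0 < n) (he : Even n) :
    (2 : ℝ) ^ n ≤ n.choose (n / 2) * √(2 * n) := by
  obtain ⟨m, rfl⟩ := he
  have hm : 0 < m := by omega
  have hchoose : (m + m).choose ((m + m) / 2) = m.centralBinom := by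
    rw [← two_mul, Nat.mul_div_cancel_left m two_pos, Nat.centralBinom]
  rw [hchoose, ← Real.sqrt_sq (by positivity : (0 : ℝ) ≤ 2 ^ (m + m)),
    ← Real.sqrt_sq (Nat.cast_nonneg m.centralBinom), ← Real.sqrt_mul (sq_nonneg _)]
  gcongr
  calc ((2 : ℝ) ^ (m + m)) ^ 2 = ((4 ^ m) ^ 2 : ℕ) := by
        rw [show 4 ^ m = 2 ^ (m + m) by rw [← two_mul, pow_mul]; norm_num]; push_cast; rfl
    _ ≤ (4 * m * m.centralBinom ^ 2 : ℕ) := by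
        exact_mod_cast four_pow_sq_le_four_mul_mul_centralBinom_sq hm
    _ = _ := by push_cast; ring

theorem stmt19 (n : ℕ) (hn : 0 < n) (he : Even n) (C : Set (Fin n → ZMod 2)) :
    ∃ x : Fin n → ZMod 2,
      (Nat.choose n (n / 2) : ℝ) * Nat.card C / 2 ^ n
          ≤ (Nat.card {y : Fin n → ZMod 2 | y - x ∈ C ∧ hammingNorm y = n / 2} : ℝ) ∧
      (Nat.card C : ℝ) / Real.sqrt (2 * n)
          ≤ (Nat.choose n (n / 2) : ℝ) * Nat.card C / 2 ^ n := by
  classical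
  obtain ⟨x, hx⟩ := exists_card_mul_le_card_mul_card_filter_sub_mem C.toFinset
    {y | hammingNorm y = n / 2}
  simp only [card_filter_hammingNorm_eq, Fintype.card_fun, ZMod.card, Fintype.card_fin] at hx
  have hshift : Nat.card {y | y - x ∈ C ∧ hammingNorm y = n / 2} =
      #{y ∈ {y | hammingNorm y = n / 2} | y - x ∈ C.toFinset} := by
    rw [Nat.card_eq_card_toFinset]
    congr 1
    ext y
    simp [and_comm]
  refine ⟨x, ?_, ?_⟩
  · rw [hshift, Nat.card_eq_card_toFinset, div_le_iff₀ (by positivity)]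
    rw [mul_comm, mul_comm (2 ^ n)] at hx
    exact_mod_cast hx
  · rw [div_le_div_iff₀ (by positivity) (by positivity)]
    calc (Nat.card C : ℝ) * 2 ^ n ≤ Nat.card C * (n.choose (n / 2) * √(2 * n)) := by
          gcongr; exact Nat.two_pow_le_choose_half_mul_sqrt hn he
      _ = _ := by ring
end
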